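/- arXiv:math/0205081 — 2 statements merged into one kernel-verified Lean document; each statement's English description precedes it below -/
import Mathlib

section
/- Let {i,j,k} be a skew-adjoint quaternion structure on V and set J = i. Then for any constants c₀, c₁, c₂, c₃ ∈ ℝ, the tensor c₀R_Id + c₁R_i + c₂R_j + c₃R_k is an almost complex Jordan IP algebraic curvature tensor relative to the pseudo-Hermitian almost complex structure J = i. -/
/-!
Write `ε = B x x = ±1`. The curvature operator `R(x, ix)` is `ε i` times a constant on each of
the three `i`-invariant pieces `span {x, ix}`, `span {jx, kx}` and their orthogonal complement
`W_x = quatPerp B i j k x`, the constants depending only on the `cᵢ`; in particular it commutes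
with `i`. With `δ = B x x * B y y`, a linear isomorphism `ψ` that sends `y, iy, jy, ky` to
`x, δ ix, jx, δ kx`, maps `W_y` onto `W_x` and satisfies `ψ ∘ i = δ i ∘ ψ` therefore conjugates
`R(y, iy)` into `R(x, ix)`. On the complements such a map exists because `W_y` and `W_x` are
complex vector spaces of the same dimension for the complex structures `i` and `δ i`.
-/

open Module

variable {V : Type*} [AddCommGroup V] [Module ℝ V] [FiniteDimensional ℝ V]

/-- `R` is an algebraic curvature tensor: multilinear in each slot and satisfying the
usual curvature symmetries. -/
def IsAlgCurvTensor (R : V → V → V → V → ℝ) : Prop :=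
  (∀ (a : ℝ) (x x' y z w : V), R (a • x + x') y z w = a * R x y z w + R x' y z w) ∧
  (∀ (a : ℝ) (x y y' z w : V), R x (a • y + y') z w = a * R x y z w + R x y' z w) ∧
  (∀ (a : ℝ) (x y z z' w : V), R x y (a • z + z') w = a * R x y z w + R x y z' w) ∧
  (∀ (a : ℝ) (x y z w w' : V), R x y z (a • w + w') = a * R x y z w + R x y z w') ∧
  (∀ x y z w : V, R x y z w = - R y x z w) ∧
  (∀ x y z w : V, R x y z w = R z w x y) ∧
  (∀ x y z w : V, R x y z w + R y z x w + R z x y w = 0)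

/-- `J` is a pseudo-Hermitian almost complex structure on `(V, B)`. -/
def IsPseudoHermitian (B : LinearMap.BilinForm ℝ V) (J : V →ₗ[ℝ] V) : Prop :=
  (∀ x : V, J (J x) = -x) ∧ (∀ x y : V, B (J x) (J y) = B x y)

/-- `π` is a nondegenerate complex line: a `2`-dimensional `J`-invariant subspace
on which `B` is nondegenerate. -/
def IsNondegComplexLine (B : LinearMap.BilinForm ℝ V) (J : V →ₗ[ℝ] V)
    (π : Submodule ℝ V) : Prop :=
  finrank ℝ π = 2 ∧ (∀ v ∈ π, J v ∈ π) ∧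
  (∀ v ∈ π, (∀ w ∈ π, B v w = 0) → v = 0)

/-- `R` is almost complex: for every `x` such that `span {x, Jx}` is a nondegenerate
complex line, the curvature operator `R(x, Jx)` (defined by
`B (A z) w = R x (Jx) z w`) commutes with `J`. -/
def IsAlmostComplex (B : LinearMap.BilinForm ℝ V) (J : V →ₗ[ℝ] V)
    (R : V → V → V → V → ℝ) : Prop :=
  ∀ x : V, IsNondegComplexLine B J (Submodule.span ℝ {x, J x}) →
    ∀ A : V →ₗ[ℝ] V, (∀ z w : V, B (A z) w = R x (J x) z w) →
      ∀ v : V, J (A v) = A (J v)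

/-- `φ` is self-adjoint with respect to `B`. -/
def IsSelfAdj (B : LinearMap.BilinForm ℝ V) (φ : V →ₗ[ℝ] V) : Prop :=
  ∀ x y : V, B (φ x) y = B x (φ y)

/-- `φ` is skew-adjoint with respect to `B`. -/
def IsSkewAdj (B : LinearMap.BilinForm ℝ V) (φ : V →ₗ[ℝ] V) : Prop :=
  ∀ x y : V, B (φ x) y = - B x (φ y)

/-- The curvature tensor `R_φ` associated to a self-adjoint map `φ`. -/
def Rs (B : LinearMap.BilinForm ℝ V) (φ : V →ₗ[ℝ] V) : V → V → V → V → ℝ :=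
  fun x y z w => B (φ y) z * B (φ x) w - B (φ x) z * B (φ y) w

/-- The curvature tensor `R_φ` associated to a skew-adjoint map `φ`. -/
def Ra (B : LinearMap.BilinForm ℝ V) (φ : V →ₗ[ℝ] V) : V → V → V → V → ℝ :=
  fun x y z w =>
    B (φ y) z * B (φ x) w - B (φ x) z * B (φ y) w - 2 * B (φ x) y * B (φ z) w

/-- `R` is almost complex Jordan IP: the Jordan normal form of the skew-symmetric
curvature operator is constant on the nondegenerate complex lines, i.e. for all
`x, y` with `|B x x| = 1` and `|B y y| = 1` the operators `R(x, Jx)` and `R(y, Jy)`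
are conjugate by an invertible linear map. -/
def IsComplexJordanIP (B : LinearMap.BilinForm ℝ V) (J : V →ₗ[ℝ] V)
    (R : V → V → V → V → ℝ) : Prop :=
  ∀ x y : V, |B x x| = 1 → |B y y| = 1 →
    ∀ Ax Ay : V →ₗ[ℝ] V,
      (∀ z w : V, B (Ax z) w = R x (J x) z w) →
      (∀ z w : V, B (Ay z) w = R y (J y) z w) →
      ∃ ψ : V ≃ₗ[ℝ] V, ∀ v : V, Ax v = ψ (Ay (ψ.symm v))

/-- `{i, j, k}` is a skew-adjoint quaternion structure on `(V, B)`. -/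
def IsQuatStruct (B : LinearMap.BilinForm ℝ V) (i j k : V →ₗ[ℝ] V) : Prop :=
  IsSkewAdj B i ∧ IsSkewAdj B j ∧ IsSkewAdj B k ∧
  (∀ x : V, i (i x) = -x) ∧ (∀ x : V, j (j x) = -x) ∧ (∀ x : V, k (k x) = -x) ∧
  (∀ x : V, i (j x) = k x) ∧ (∀ x : V, j (i x) = - k x) ∧
  (∀ x : V, j (k x) = i x) ∧ (∀ x : V, k (j x) = - i x) ∧
  (∀ x : V, k (i x) = j x) ∧ (∀ x : V, i (k x) = - j x)

section Adjoint

variable {E : Type*} [AddCommGroup E] [Module ℝ E] {B : LinearMap.BilinForm ℝ E} {φ : E →ₗ[ℝ] E}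

theorem IsSkewAdj.apply_right (hφ : IsSkewAdj B φ) (u v : E) : B u (φ v) = -B (φ u) v := by
  rw [hφ, neg_neg]

theorem IsSkewAdj.apply_comm (hsymm : ∀ x y : E, B x y = B y x) (hφ : IsSkewAdj B φ) (u v : E) :
    B (φ u) v = -B (φ v) u := by
  rw [hφ, hsymm]

theorem IsSkewAdj.apply_self (hsymm : ∀ x y : E, B x y = B y x) (hφ : IsSkewAdj B φ) (u : E) :
    B (φ u) u = 0 := by
  linarith [hφ.apply_comm hsymm u u]

theorem IsSelfAdj.apply_comm (hsymm : ∀ x y : E, B x y = B y x) (hφ : IsSelfAdj B φ) (u v : E) :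
    B (φ u) v = B (φ v) u := by
  rw [hφ, hsymm]

theorem LinearMap.BilinForm.ext_of_separatingLeft (hB : B.SeparatingLeft) {A A' : E →ₗ[ℝ] E}
    (h : ∀ z w, B (A z) w = B (A' z) w) : A = A' :=
  LinearMap.ext fun z => sub_eq_zero.mp <| hB _ fun w => by
    rw [map_sub, LinearMap.sub_apply, h, sub_self]

end Adjoint

section CurvatureTensor

variable {E : Type*} [AddCommGroup E] [Module ℝ E]

theorem IsAlgCurvTensor.add {R S : E → E → E → E → ℝ} (hR : IsAlgCurvTensor R)
    (hS : IsAlgCurvTensor S) : IsAlgCurvTensor fun x y z w => R x y z w + S x y z w := by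
  obtain ⟨r₁, r₂, r₃, r₄, r₅, r₆, r₇⟩ := hR
  obtain ⟨s₁, s₂, s₃, s₄, s₅, s₆, s₇⟩ := hS
  refine ⟨fun a x x' y z w => ?_, fun a x y y' z w => ?_, fun a x y z z' w => ?_,
    fun a x y z w w' => ?_, fun x y z w => ?_, fun x y z w => ?_, fun x y z w => ?_⟩ <;>
    beta_reduce
  · rw [r₁, s₁]; ring
  · rw [r₂, s₂]; ring
  · rw [r₃, s₃]; ring
  · rw [r₄, s₄]; ring
  · rw [r₅, s₅]; ring
  · rw [r₆, s₆]
  · linear_combination r₇ x y z w + s₇ x y z w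

theorem IsAlgCurvTensor.const_mul {R : E → E → E → E → ℝ} (hR : IsAlgCurvTensor R) (c : ℝ) :
    IsAlgCurvTensor fun x y z w => c * R x y z w := by
  obtain ⟨r₁, r₂, r₃, r₄, r₅, r₆, r₇⟩ := hR
  refine ⟨fun a x x' y z w => ?_, fun a x y y' z w => ?_, fun a x y z z' w => ?_,
    fun a x y z w w' => ?_, fun x y z w => ?_, fun x y z w => ?_, fun x y z w => ?_⟩ <;>
    beta_reduce
  · rw [r₁]; ring
  · rw [r₂]; ring
  · rw [r₃]; ring
  · rw [r₄]; ring
  · rw [r₅]; ring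
  · rw [r₆]
  · linear_combination c * r₇ x y z w

variable {B : LinearMap.BilinForm ℝ E} {φ : E →ₗ[ℝ] E}

theorem isAlgCurvTensor_Rs (hsymm : ∀ x y : E, B x y = B y x) (hφ : IsSelfAdj B φ) :
    IsAlgCurvTensor (Rs B φ) := by
  have h := hφ.apply_comm hsymm
  refine ⟨fun a x x' y z w => ?_, fun a x y y' z w => ?_, fun a x y z z' w => ?_,
    fun a x y z w w' => ?_, fun x y z w => ?_, fun x y z w => ?_, fun x y z w => ?_⟩ <;>
    simp only [Rs, map_add, map_smul, LinearMap.add_apply, LinearMap.smul_apply, smul_eq_mul]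
  · ring
  · ring
  · ring
  · ring
  · ring
  · rw [h w x, h z y, h z x, h w y]; ring
  · rw [h z x, h y x, h z y]; ring

theorem isAlgCurvTensor_Ra (hsymm : ∀ x y : E, B x y = B y x) (hφ : IsSkewAdj B φ) :
    IsAlgCurvTensor (Ra B φ) := by
  have h := hφ.apply_comm hsymm
  refine ⟨fun a x x' y z w => ?_, fun a x y y' z w => ?_, fun a x y z z' w => ?_,
    fun a x y z w w' => ?_, fun x y z w => ?_, fun x y z w => ?_, fun x y z w => ?_⟩ <;>
    simp only [Ra, map_add, map_smul, LinearMap.add_apply, LinearMap.smul_apply, smul_eq_mul]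
  · ring
  · ring
  · ring
  · ring
  · rw [h y x]; ring
  · rw [h w x, h z y, h z x, h w y]; ring
  · rw [h z x, h y x, h z y]; ring

end CurvatureTensor

theorem exists_linearEquiv_conj_of_mul_self_eq_neg_one
    {M N : Type*} [AddCommGroup M] [Module ℝ M] [FiniteDimensional ℝ M]
    [AddCommGroup N] [Module ℝ N] [FiniteDimensional ℝ N]
    (I : Module.End ℝ M) (J : Module.End ℝ N) (hI : I * I = -1) (hJ : J * J = -1)
    (h : finrank ℝ M = finrank ℝ N) :
    ∃ σ : M ≃ₗ[ℝ] N, ∀ v, σ (I v) = J (σ v) := by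
  let : Module ℂ M := Module.compHom M (Complex.lift ⟨I, hI⟩ : ℂ →+* Module.End ℝ M)
  let : Module ℂ N := Module.compHom N (Complex.lift ⟨J, hJ⟩ : ℂ →+* Module.End ℝ N)
  have : IsScalarTower ℝ ℂ M := ⟨fun r c v => by
    show Complex.lift ⟨I, hI⟩ (r • c) v = r • Complex.lift ⟨I, hI⟩ c v
    rw [map_smul]; rfl⟩
  have : IsScalarTower ℝ ℂ N := ⟨fun r c v => by
    show Complex.lift ⟨J, hJ⟩ (r • c) v = r • Complex.lift ⟨J, hJ⟩ c v
    rw [map_smul]; rfl⟩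
  have : FiniteDimensional ℂ M := FiniteDimensional.right ℝ ℂ M
  have : FiniteDimensional ℂ N := FiniteDimensional.right ℝ ℂ N
  have hM := Module.finrank_mul_finrank ℝ ℂ M
  have hN := Module.finrank_mul_finrank ℝ ℂ N
  rw [Complex.finrank_real_complex] at hM hN
  let σ : M ≃ₗ[ℂ] N := LinearEquiv.ofFinrankEq M N (by omega)
  refine ⟨σ.restrictScalars ℝ, fun v => ?_⟩
  have hIv : I v = Complex.I • v := by
    show I v = Complex.lift ⟨I, hI⟩ Complex.I v
    simp
  have hJv : J (σ v) = Complex.I • σ v := by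
    show J (σ v) = Complex.lift ⟨J, hJ⟩ Complex.I (σ v)
    simp
  show σ (I v) = J (σ v)
  rw [hIv, hJv, map_smul]

section Quaternion

variable {E : Type*} [AddCommGroup E] [Module ℝ E] {B : LinearMap.BilinForm ℝ E}
  {i j k : E →ₗ[ℝ] E}

def quatCurvOp (B : LinearMap.BilinForm ℝ E) (i j k : E →ₗ[ℝ] E) (a b c : ℝ) (x : E) :
    E →ₗ[ℝ] E :=
  a • ((B (i x)).smulRight x - (B x).smulRight (i x)) - (c * B x x) • i
    + b • ((B (j x)).smulRight (k x) - (B (k x)).smulRight (j x))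

theorem quatCurvOp_apply (a b c : ℝ) (x z : E) :
    quatCurvOp B i j k a b c x z = a • (B (i x) z • x - B x z • i x) - (c * B x x) • i z
      + b • (B (j x) z • k x - B (k x) z • j x) := by
  simp only [quatCurvOp, LinearMap.add_apply, LinearMap.sub_apply, LinearMap.smul_apply,
    LinearMap.smulRight_apply]

namespace IsQuatStruct

theorem bilin_quatCurvOp_apply (hsymm : ∀ x y : E, B x y = B y x) (hq : IsQuatStruct B i j k)
    (c₀ c₁ c₂ c₃ : ℝ) (x z w : E) :
    B (quatCurvOp B i j k (c₀ + c₁) (c₂ + c₃) (2 * c₁) x z) w =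
      c₀ * Rs B LinearMap.id x (i x) z w + c₁ * Ra B i x (i x) z w +
        c₂ * Ra B j x (i x) z w + c₃ * Ra B k x (i x) z w := by
  obtain ⟨hi, hj, hk, hii, hjj, hkk, hij, hji, hjk, hkj, hki, hik⟩ := hq
  simp only [quatCurvOp_apply, Rs, Ra, map_add, map_sub, map_smul, map_neg,
    LinearMap.add_apply, LinearMap.sub_apply, LinearMap.smul_apply, LinearMap.neg_apply,
    LinearMap.id_apply, smul_eq_mul, hi.apply_right, hii, hji, hki, hij, hik,
    hj.apply_self hsymm, hk.apply_self hsymm, neg_neg]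
  ring

theorem quatCurvOp_apply_i (hq : IsQuatStruct B i j k) (a b c : ℝ) (x z : E) :
    quatCurvOp B i j k a b c x (i z) = i (quatCurvOp B i j k a b c x z) := by
  obtain ⟨hi, -, -, hii, -, -, hij, -, -, -, -, hik⟩ := hq
  simp only [quatCurvOp_apply, map_add, map_sub, map_smul, map_neg, LinearMap.neg_apply,
    hi.apply_right, hii, hij, hik, neg_neg]
  module

end IsQuatStruct

def quatPerp (B : LinearMap.BilinForm ℝ E) (i j k : E →ₗ[ℝ] E) (x : E) : Submodule ℝ E :=
  LinearMap.ker (LinearMap.pi ![B x, B (i x), B (j x), B (k x)])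

theorem mem_quatPerp {x z : E} :
    z ∈ quatPerp B i j k x ↔ B x z = 0 ∧ B (i x) z = 0 ∧ B (j x) z = 0 ∧ B (k x) z = 0 := by
  simp [quatPerp, funext_iff, Fin.forall_fin_succ]

noncomputable def quatFrameProj (B : LinearMap.BilinForm ℝ E) (i j k : E →ₗ[ℝ] E) (y : E) :
    E →ₗ[ℝ] E :=
  (B y y)⁻¹ • ((B y).smulRight y + (B (i y)).smulRight (i y) + (B (j y)).smulRight (j y)
    + (B (k y)).smulRight (k y))

theorem quatFrameProj_apply (y z : E) :
    quatFrameProj B i j k y z =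
      (B y y)⁻¹ • (B y z • y + B (i y) z • i y + B (j y) z • j y + B (k y) z • k y) := by
  simp only [quatFrameProj, LinearMap.smul_apply, LinearMap.add_apply, LinearMap.smulRight_apply]

theorem quatFrameProj_eq_zero {y z : E} (hz : z ∈ quatPerp B i j k y) :
    quatFrameProj B i j k y z = 0 := by
  obtain ⟨h₁, h₂, h₃, h₄⟩ := mem_quatPerp.mp hz
  simp [quatFrameProj_apply, h₁, h₂, h₃, h₄]

namespace IsQuatStruct

theorem apply_mem_quatPerp (hq : IsQuatStruct B i j k) {x z : E} (hz : z ∈ quatPerp B i j k x) :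
    i z ∈ quatPerp B i j k x := by
  obtain ⟨hi, -, -, hii, -, -, hij, -, -, -, -, hik⟩ := hq
  obtain ⟨h₁, h₂, h₃, h₄⟩ := mem_quatPerp.mp hz
  simp only [mem_quatPerp, hi.apply_right, hii, hij, hik, map_neg, LinearMap.neg_apply, h₁, h₂,
    h₃, h₄, neg_zero, and_self]

theorem finrank_quatPerp [FiniteDimensional ℝ E] (hsymm : ∀ x y : E, B x y = B y x)
    (hq : IsQuatStruct B i j k) {x : E} (hx : B x x ≠ 0) :
    finrank ℝ (quatPerp B i j k x) + 4 = finrank ℝ E := by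
  obtain ⟨hi, hj, hk, hii, hjj, hkk, hij, hji, hjk, hkj, hki, hik⟩ := hq
  let L : E →ₗ[ℝ] Fin 4 → ℝ := LinearMap.pi ![B x, B (i x), B (j x), B (k x)]
  have hL : LinearMap.range L = ⊤ := LinearMap.range_eq_top.mpr fun c => by
    refine ⟨(B x x)⁻¹ • (c 0 • x + c 1 • i x + c 2 • j x + c 3 • k x), funext fun m => ?_⟩
    fin_cases m <;>
      simp [L, hi.apply_right, hj.apply_right, hk.apply_right, hii, hjj, hkk, hij, hji, hjk,
        hkj, hki, hik, hi.apply_self hsymm, hj.apply_self hsymm, hk.apply_self hsymm,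
        mul_comm _ (B x x), hx]
  have := LinearMap.finrank_range_add_finrank_ker L
  rw [hL, finrank_top, Module.finrank_fin_fun] at this
  exact (add_comm _ _).trans this

theorem sub_quatFrameProj_mem (hsymm : ∀ x y : E, B x y = B y x) (hq : IsQuatStruct B i j k)
    {y : E} (hy : B y y ≠ 0) (z : E) : z - quatFrameProj B i j k y z ∈ quatPerp B i j k y := by
  obtain ⟨hi, hj, hk, hii, hjj, hkk, hij, hji, hjk, hkj, hki, hik⟩ := hq
  simp [mem_quatPerp, quatFrameProj_apply, hi.apply_right, hj.apply_right, hk.apply_right, hii,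
    hjj, hkk, hij, hji, hjk, hkj, hki, hik, hi.apply_self hsymm, hj.apply_self hsymm,
    hk.apply_self hsymm, mul_comm _ (B y y), hy]

theorem quatFrameProj_apply_i (hq : IsQuatStruct B i j k) (y z : E) :
    quatFrameProj B i j k y (i z) = i (quatFrameProj B i j k y z) := by
  obtain ⟨hi, -, -, hii, -, -, hij, -, -, -, -, hik⟩ := hq
  simp only [quatFrameProj_apply, map_add, map_smul, map_neg, LinearMap.neg_apply,
    hi.apply_right, hii, hij, hik, neg_neg]
  module

theorem quatFrameProj_self (hsymm : ∀ x y : E, B x y = B y x) (hq : IsQuatStruct B i j k)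
    {y : E} (hy : B y y ≠ 0) : quatFrameProj B i j k y y = y := by
  obtain ⟨hi, hj, hk, -⟩ := hq
  simp [quatFrameProj_apply, hi.apply_self hsymm, hj.apply_self hsymm, hk.apply_self hsymm, hy]

theorem quatFrameProj_j_self (hsymm : ∀ x y : E, B x y = B y x) (hq : IsQuatStruct B i j k)
    {y : E} (hy : B y y ≠ 0) : quatFrameProj B i j k y (j y) = j y := by
  obtain ⟨hi, hj, hk, -, hjj, -, -, hji, hjk, -⟩ := hq
  simp [quatFrameProj_apply, hj.apply_right, hjj, hji, hjk, hi.apply_self hsymm,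
    hj.apply_self hsymm, hk.apply_self hsymm, hy]

end IsQuatStruct

structure IsQuatFrameMap (B : LinearMap.BilinForm ℝ E) (i j : E →ₗ[ℝ] E) (δ : ℝ) (y x : E)
    (ψ : E →ₗ[ℝ] E) : Prop where
  map_i : ∀ z, ψ (i z) = δ • i (ψ z)
  map_y : ψ y = x
  map_jy : ψ (j y) = j x
  bilin_x : ∀ z, B x (ψ z) = δ * B y z
  bilin_jx : ∀ z, B (j x) (ψ z) = δ * B (j y) z

variable {δ : ℝ} {x y : E}

namespace IsQuatFrameMap

variable {ψ : E →ₗ[ℝ] E}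

theorem map_ky (hψ : IsQuatFrameMap B i j δ y x ψ) (hij : ∀ z, i (j z) = k z) :
    ψ (k y) = δ • k x := by
  rw [← hij, hψ.map_i, hψ.map_jy, hij]

theorem bilin_i (hψ : IsQuatFrameMap B i j δ y x ψ) (hi : IsSkewAdj B i) (hδ : δ * δ = 1)
    {u u' : E} {c : ℝ} (hu : ∀ z, B u (ψ z) = c * B u' z) (z : E) :
    B (i u) (ψ z) = δ * c * B (i u') z := by
  have hiψ : i (ψ z) = δ • ψ (i z) := by rw [hψ.map_i, smul_smul, hδ, one_smul]
  rw [hi, hiψ, map_smul, hu, hi.apply_right, smul_eq_mul]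
  ring

theorem bilin_ix (hψ : IsQuatFrameMap B i j δ y x ψ) (hi : IsSkewAdj B i) (hδ : δ * δ = 1)
    (z : E) : B (i x) (ψ z) = B (i y) z := by
  rw [hψ.bilin_i hi hδ hψ.bilin_x, hδ, one_mul]

theorem bilin_kx (hψ : IsQuatFrameMap B i j δ y x ψ) (hi : IsSkewAdj B i)
    (hij : ∀ z, i (j z) = k z) (hδ : δ * δ = 1) (z : E) : B (k x) (ψ z) = B (k y) z := by
  rw [← hij, hψ.bilin_i hi hδ hψ.bilin_jx, hδ, one_mul, hij]

theorem quatCurvOp_comp (hψ : IsQuatFrameMap B i j δ y x ψ) (hi : IsSkewAdj B i)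
    (hij : ∀ z, i (j z) = k z) (hδ : δ * δ = 1) (hxy : B x x = δ * B y y) (a b c : ℝ) (z : E) :
    quatCurvOp B i j k a b c x (ψ z) = ψ (quatCurvOp B i j k a b c y z) := by
  simp only [quatCurvOp_apply, map_add, map_sub, map_smul, hψ.bilin_x, hψ.bilin_ix hi hδ,
    hψ.bilin_jx, hψ.bilin_kx hi hij hδ, hψ.map_i, hψ.map_y, hψ.map_jy, hψ.map_ky hij, hxy]
  module

theorem mem_quatPerp_of_apply_eq_zero
    (hψ : IsQuatFrameMap B i j δ y x ψ) (hi : IsSkewAdj B i) (hij : ∀ z, i (j z) = k z)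
    (hδ : δ * δ = 1) {z : E} (hz : ψ z = 0) : z ∈ quatPerp B i j k y := by
  have h₁ := hψ.bilin_x z
  have h₂ := hψ.bilin_ix hi hδ z
  have h₃ := hψ.bilin_jx z
  have h₄ := hψ.bilin_kx hi hij hδ z
  rw [hz, map_zero] at h₁ h₂ h₃ h₄
  exact mem_quatPerp.mpr ⟨by linear_combination -δ * h₁ - B y z * hδ, h₂.symm,
    by linear_combination -δ * h₃ - B (j y) z * hδ, h₄.symm⟩

end IsQuatFrameMap

namespace IsQuatStruct

theorem exists_twisted_map_quatPerp [FiniteDimensional ℝ E] (hsymm : ∀ x y : E, B x y = B y x)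
    (hq : IsQuatStruct B i j k) (hx : B x x ≠ 0) (hy : B y y ≠ 0) (hδ : δ * δ = 1) :
    ∃ S : E →ₗ[ℝ] E, (∀ z, S z ∈ quatPerp B i j k x) ∧ (∀ z, S (i z) = δ • i (S z)) ∧
      S y = 0 ∧ S (j y) = 0 ∧ ∀ z ∈ quatPerp B i j k y, S z = 0 → z = 0 := by
  have hii : ∀ z, i (i z) = -z := hq.2.2.2.1
  let I : Module.End ℝ (quatPerp B i j k y) := i.restrict fun _ => hq.apply_mem_quatPerp
  let J : Module.End ℝ (quatPerp B i j k x) := δ • i.restrict fun _ => hq.apply_mem_quatPerp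
  have hI : I * I = -1 := by
    ext z; simp [I, hii]
  have hJ : J * J = -1 := by
    ext z; simp [J, smul_smul, hδ, hii]
  obtain ⟨σ, hσ⟩ := exists_linearEquiv_conj_of_mul_self_eq_neg_one I J hI hJ
    (by have := hq.finrank_quatPerp hsymm hx; have := hq.finrank_quatPerp hsymm hy; omega)
  let pr : E →ₗ[ℝ] quatPerp B i j k y := (LinearMap.id - quatFrameProj B i j k y).codRestrict _
    (hq.sub_quatFrameProj_mem hsymm hy)
  have hpr : ∀ z, pr (i z) = I (pr z) := fun z => Subtype.ext <| by
    simp [pr, I, hq.quatFrameProj_apply_i]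
  refine ⟨(quatPerp B i j k x).subtype ∘ₗ σ.toLinearMap ∘ₗ pr, fun z => (σ (pr z)).2,
    fun z => ?_, ?_, ?_, fun z hz hSz => ?_⟩
  · simp [hpr, hσ, J]
  · have : pr y = 0 := Subtype.ext <| by simp [pr, hq.quatFrameProj_self hsymm hy]
    simp [this]
  · have : pr (j y) = 0 := Subtype.ext <| by simp [pr, hq.quatFrameProj_j_self hsymm hy]
    simp [this]
  · have : pr z = 0 := by simpa using hSz
    simpa [pr, quatFrameProj_eq_zero hz] using congrArg Subtype.val this

theorem exists_quatFrameMap [FiniteDimensional ℝ E] (hsymm : ∀ x y : E, B x y = B y x)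
    (hq : IsQuatStruct B i j k) (hy : B y y ≠ 0) (hδ : δ * δ = 1) (hxy : B x x = δ * B y y) :
    ∃ ψ : E ≃ₗ[ℝ] E, IsQuatFrameMap B i j δ y x ψ := by
  have hx : B x x ≠ 0 := hxy ▸ mul_ne_zero (left_ne_zero_of_mul_eq_one hδ) hy
  obtain ⟨S, hSx, hSi, hSy, hSjy, hS⟩ := hq.exists_twisted_map_quatPerp hsymm hx hy hδ
  obtain ⟨hi, hj, hk, hii, hjj, hkk, hij, hji, hjk, hkj, hki, hik⟩ := hq
  let T : E →ₗ[ℝ] E := (B y y)⁻¹ • ((B y).smulRight x + δ • (B (i y)).smulRight (i x)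
    + (B (j y)).smulRight (j x) + δ • (B (k y)).smulRight (k x))
  have hT : ∀ z, T z = (B y y)⁻¹ • (B y z • x + (δ * B (i y) z) • i x + B (j y) z • j x
      + (δ * B (k y) z) • k x) := fun z => by
    simp only [T, LinearMap.smul_apply, LinearMap.add_apply, LinearMap.smulRight_apply, smul_smul]
  have hψ : IsQuatFrameMap B i j δ y x (T + S) := by
    constructor
    · intro z
      simp only [LinearMap.add_apply, hT, hSi, map_add, map_smul, smul_add, map_neg,
        LinearMap.neg_apply, hi.apply_right, hii, hij, hik, smul_smul]
      match_scalars
      · linear_combination (B y y)⁻¹ * B (i y) z * hδ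
      · ring
      · linear_combination (B y y)⁻¹ * B (k y) z * hδ
      · ring
      · ring
    · simp [hT, hSy, hi.apply_self hsymm, hj.apply_self hsymm, hk.apply_self hsymm, hy]
    · simp [hT, hSjy, hj.apply_right, hjj, hji, hjk, hi.apply_self hsymm, hj.apply_self hsymm,
        hk.apply_self hsymm, hy]
    · intro z
      simp [hT, (mem_quatPerp.mp (hSx z)).1, hi.apply_right, hj.apply_right, hk.apply_right,
        hi.apply_self hsymm, hj.apply_self hsymm, hk.apply_self hsymm, hxy]
      field_simp
    · intro z
      simp [hT, (mem_quatPerp.mp (hSx z)).2.2.1, hi.apply_right, hj.apply_right, hk.apply_right,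
        hjj, hij, hkj, hj.apply_self hsymm, hk.apply_self hsymm, hi.apply_self hsymm, hxy]
      field_simp
  have hinj : Function.Injective (T + S) := by
    refine (injective_iff_map_eq_zero _).mpr fun z hz => hS z ?_ ?_
    · exact hψ.mem_quatPerp_of_apply_eq_zero hi hij hδ hz
    · obtain ⟨h₁, h₂, h₃, h₄⟩ := mem_quatPerp.mp (hψ.mem_quatPerp_of_apply_eq_zero hi hij hδ hz)
      simpa [hT, h₁, h₂, h₃, h₄] using hz
  exact ⟨LinearEquiv.ofInjectiveEndo _ hinj, hψ⟩

theorem exists_conj_quatCurvOp [FiniteDimensional ℝ E] (hsymm : ∀ x y : E, B x y = B y x)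
    (hq : IsQuatStruct B i j k) (hx : |B x x| = 1) (hy : |B y y| = 1) (a b c : ℝ) :
    ∃ ψ : E ≃ₗ[ℝ] E, ∀ v,
      quatCurvOp B i j k a b c x v = ψ (quatCurvOp B i j k a b c y (ψ.symm v)) := by
  have hx2 : B x x * B x x = 1 := by rw [← abs_mul_abs_self, hx, one_mul]
  have hy2 : B y y * B y y = 1 := by rw [← abs_mul_abs_self, hy, one_mul]
  have hδ : B x x * B y y * (B x x * B y y) = 1 := by
    linear_combination B y y * B y y * hx2 + hy2
  have hxy : B x x = B x x * B y y * B y y := by linear_combination -B x x * hy2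
  obtain ⟨ψ, hψ⟩ := hq.exists_quatFrameMap hsymm (left_ne_zero_of_mul_eq_one hy2) hδ hxy
  obtain ⟨hi, -, -, -, -, -, hij, -⟩ := hq
  exact ⟨ψ, fun v => by simpa using hψ.quatCurvOp_comp hi hij hδ hxy a b c (ψ.symm v)⟩

end IsQuatStruct

end Quaternion

/-- For a skew-adjoint quaternion structure `{i, j, k}` and `J = i`,
`c₀ R_Id + c₁ R_i + c₂ R_j + c₃ R_k` is an almost complex Jordan IP algebraic
curvature tensor relative to `J = i`. -/
theorem quaternion_jordanIP
    (B : LinearMap.BilinForm ℝ V)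
    (hsymm : ∀ x y : V, B x y = B y x)
    (hnd : ∀ v : V, (∀ w : V, B v w = 0) → v = 0)
    (i j k : V →ₗ[ℝ] V) (hquat : IsQuatStruct B i j k)
    (c₀ c₁ c₂ c₃ : ℝ) :
    IsAlgCurvTensor
        (fun x y z w => c₀ * Rs B LinearMap.id x y z w + c₁ * Ra B i x y z w +
          c₂ * Ra B j x y z w + c₃ * Ra B k x y z w) ∧
      IsAlmostComplex B i
        (fun x y z w => c₀ * Rs B LinearMap.id x y z w + c₁ * Ra B i x y z w +
          c₂ * Ra B j x y z w + c₃ * Ra B k x y z w) ∧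
      IsComplexJordanIP B i
        (fun x y z w => c₀ * Rs B LinearMap.id x y z w + c₁ * Ra B i x y z w +
          c₂ * Ra B j x y z w + c₃ * Ra B k x y z w) := by
  have ⟨hi, hj, hk, _⟩ := hquat
  have hR := hquat.bilin_quatCurvOp_apply hsymm c₀ c₁ c₂ c₃
  have hA (x : V) {A : V →ₗ[ℝ] V} (h : ∀ z w, B (A z) w = c₀ * Rs B LinearMap.id x (i x) z w +
      c₁ * Ra B i x (i x) z w + c₂ * Ra B j x (i x) z w + c₃ * Ra B k x (i x) z w) :
      A = quatCurvOp B i j k (c₀ + c₁) (c₂ + c₃) (2 * c₁) x :=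
    LinearMap.BilinForm.ext_of_separatingLeft hnd fun z w => (h z w).trans (hR x z w).symm
  refine ⟨?_, fun x _ A hAx v => ?_, fun x y hx hy Ax Ay hAx hAy => ?_⟩
  · exact ((((isAlgCurvTensor_Rs hsymm fun _ _ => rfl).const_mul c₀).add
      ((isAlgCurvTensor_Ra hsymm hi).const_mul c₁)).add
      ((isAlgCurvTensor_Ra hsymm hj).const_mul c₂)).add
      ((isAlgCurvTensor_Ra hsymm hk).const_mul c₃)
  · rw [hA x hAx]
    exact (hquat.quatCurvOp_apply_i _ _ _ x v).symm
  · rw [hA x hAx, hA y hAy]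
    exact hquat.exists_conj_quatCurvOp hsymm hx hy _ _ _
end

section
/- Let V be a real inner product space (positive definite) of dimension 2s with s ≥ 2, and let J be a pseudo-Hermitian almost complex structure on V. For any distinct real numbers λ₀, λ₁ there exist constants c₀, c₁ ∈ ℝ such that, setting R := c₀R_Id + c₁R_J, for every unit vector x ∈ V the operator J∘R(x,Jx) commutes with J and is self-adjoint, and, viewed as a complex-linear operator on (V,J) ≅ ℂ^s, has exactly the eigenvalues λ₀ with multiplicity s-1 and λ₁ with multiplicity 1. -/
/-! Expanding the two curvature tensors gives `J ∘ R(x, Jx) = (c₀ + c₁) P + 2 c₁` with `P` the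
`B`-orthogonal projection onto the complex line `span {x, Jx}`; `P` is self-adjoint and commutes
with `J`. With `c₀ + c₁ = a₁ - a₀` and `2 c₁ = a₀`, the operator is therefore `a₁` on that line
(real dimension `2 = tr P`) and `a₀` on `ker P`, of real dimension `2s - 2`. -/

open Module

variable {V : Type*} [AddCommGroup V] [Module ℝ V] [FiniteDimensional ℝ V]

namespace Module.End

variable {K M : Type*} [Field K] [AddCommGroup M] [Module K M] {P : End K M} {k : K}

theorem mem_eigenspace_smul_add_smul_one_iff (a c : K) {v : M} :
    v ∈ eigenspace (k • P + a • 1) c ↔ k • P v = (c - a) • v := by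
  rw [mem_eigenspace_iff, sub_smul, eq_sub_iff_add_eq]
  simp

theorem eigenspace_smul_add_smul_one_self (hk : k ≠ 0) (a : K) :
    eigenspace (k • P + a • 1) a = LinearMap.ker P := by
  ext v
  rw [mem_eigenspace_smul_add_smul_one_iff, sub_self, zero_smul, LinearMap.mem_ker]
  exact smul_eq_zero.trans (or_iff_right hk)

theorem eigenspace_smul_add_smul_one_add (hP : IsIdempotentElem P) (hk : k ≠ 0) (a : K) :
    eigenspace (k • P + a • 1) (k + a) = LinearMap.range P := by
  ext v
  rw [mem_eigenspace_smul_add_smul_one_iff, add_sub_cancel_right,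
    LinearMap.IsIdempotentElem.mem_range_iff hP]
  exact (smul_right_injective M hk).eq_iff

theorem eigenspace_smul_add_smul_one_eq_bot (hP : IsIdempotentElem P) (a : K) {c : K}
    (hca : c ≠ a) (hcka : c ≠ k + a) : eigenspace (k • P + a • 1) c = ⊥ := by
  refine (Submodule.eq_bot_iff _).2 fun v hv => ?_
  rw [mem_eigenspace_smul_add_smul_one_iff] at hv
  -- applying `P` to `k • P v = (c - a) • v` shows that `v` is fixed by `P`
  have hPv : P v = v := by
    have h := congrArg P hv
    rw [map_smul, map_smul, ← Module.End.mul_apply, hP.eq, hv] at h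
    exact (smul_right_injective M (sub_ne_zero.2 hca) h).symm
  rw [hPv, ← sub_eq_zero, ← sub_smul] at hv
  exact (smul_eq_zero.1 hv).resolve_left
    (sub_ne_zero.2 fun h => hcka (by rw [h, sub_add_cancel]))

end Module.End

section PseudoHermitian

variable {E : Type*} [AddCommGroup E] [Module ℝ E] {B : LinearMap.BilinForm ℝ E}
  {J : E →ₗ[ℝ] E}

theorem LinearMap.BilinForm.separatingLeft_of_pos (hpos : ∀ x : E, x ≠ 0 → 0 < B x x) :
    B.SeparatingLeft := by
  intro x hx
  by_contra h
  exact (hpos x h).ne' (hx x)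

theorem IsPseudoHermitian.isSkewAdj (hJ : IsPseudoHermitian B J) : IsSkewAdj B J := by
  intro x y
  have h := hJ.2 x (J y)
  rw [hJ.1 y, map_neg] at h
  linarith

theorem IsSkewAdj.apply_self_right_eq_zero (hsymm : ∀ x y : E, B x y = B y x)
    (hJ : IsSkewAdj B J) (x : E) : B x (J x) = 0 := by
  have h := hJ x x
  rw [hsymm] at h
  linarith

theorem IsSelfAdj.smul_add_smul_one {P : Module.End ℝ E} (hP : IsSelfAdj B P) (k a : ℝ) :
    IsSelfAdj B (k • P + a • 1) := by
  intro z w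
  simp only [LinearMap.add_apply, LinearMap.smul_apply, Module.End.one_apply, map_add,
    map_smul, hP z w]

variable (B) in
def pairProjection (u v : E) : Module.End ℝ E :=
  (B u).smulRight u + (B v).smulRight v

@[simp]
theorem pairProjection_apply (u v z : E) :
    pairProjection B u v z = B u z • u + B v z • v := rfl

section Orthonormal

variable {u v : E} (hu : B u u = 1) (hv : B v v = 1) (huv : B u v = 0) (hvu : B v u = 0)
include hu hv huv hvu

theorem isIdempotentElem_pairProjection : IsIdempotentElem (pairProjection B u v) := by
  ext z
  simp [hu, hv, huv, hvu]

theorem finrank_range_pairProjection [FiniteDimensional ℝ E] :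
    finrank ℝ (LinearMap.range (pairProjection B u v)) = 2 := by
  have h := ((LinearMap.isProj_range_iff_isIdempotentElem _).2
    (isIdempotentElem_pairProjection hu hv huv hvu)).trace
  rw [pairProjection, map_add, LinearMap.trace_smulRight, LinearMap.trace_smulRight, hu, hv]
    at h
  exact_mod_cast (h.symm.trans one_add_one_eq_two :)

end Orthonormal

theorem isSelfAdj_pairProjection (hsymm : ∀ x y : E, B x y = B y x) (u v : E) :
    IsSelfAdj B (pairProjection B u v) := by
  intro z w
  simp only [pairProjection_apply, map_add, map_smul, LinearMap.add_apply,
    LinearMap.smul_apply, smul_eq_mul, hsymm z u, hsymm z v]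
  ring

theorem IsPseudoHermitian.commute_pairProjection (hJ : IsPseudoHermitian B J) (x : E) :
    Commute J (pairProjection B x (J x)) := by
  ext z
  simp only [Module.End.mul_apply, pairProjection_apply, map_add, map_smul, hJ.1,
    hJ.2, hJ.isSkewAdj x z]
  module

theorem IsPseudoHermitian.comp_eq_pairProjection (hJ : IsPseudoHermitian B J)
    (hB : B.SeparatingLeft) {x : E} (hx : B x x = 1) {c₀ c₁ : ℝ} {A : Module.End ℝ E}
    (hA : ∀ z w : E, B (A z) w =
      c₀ * Rs B LinearMap.id x (J x) z w + c₁ * Ra B J x (J x) z w) :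
    J ∘ₗ A = (c₀ + c₁) • pairProjection B x (J x) + (2 * c₁) • 1 := by
  have hAz : ∀ z, A z = (c₀ + c₁) • (B (J x) z • x - B x z • J x) - (2 * c₁) • J z := by
    intro z
    refine sub_eq_zero.1 (hB _ fun w => ?_)
    simp only [map_sub, map_smul, LinearMap.sub_apply, LinearMap.smul_apply, smul_eq_mul,
      hA, Rs, Ra, LinearMap.id_coe, id_eq, hJ.1, hJ.2, hx, map_neg, LinearMap.neg_apply]
    ring
  ext z
  simp only [LinearMap.comp_apply, hAz, map_sub, map_smul, hJ.1, LinearMap.add_apply,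
    LinearMap.smul_apply, pairProjection_apply, Module.End.one_apply]
  module

end PseudoHermitian

theorem eigenvalues_id_J_general
    (B : LinearMap.BilinForm ℝ V)
    (hsymm : ∀ x y : V, B x y = B y x)
    (hpos : ∀ x : V, x ≠ 0 → 0 < B x x)
    (s : ℕ) (hdim : finrank ℝ V = 2 * s)
    (J : V →ₗ[ℝ] V) (hJ : IsPseudoHermitian B J)
    (a₀ a₁ : ℝ) (hne : a₀ ≠ a₁) :
    ∃ c₀ c₁ : ℝ, ∀ x : V, B x x = 1 →
      ∀ A : V →ₗ[ℝ] V,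
        (∀ z w : V, B (A z) w =
          c₀ * Rs B LinearMap.id x (J x) z w + c₁ * Ra B J x (J x) z w) →
        (∀ v : V, J ((J ∘ₗ A) v) = (J ∘ₗ A) (J v)) ∧
        (∀ z w : V, B ((J ∘ₗ A) z) w = B z ((J ∘ₗ A) w)) ∧
        finrank ℝ (Module.End.eigenspace (J ∘ₗ A) a₀) = 2 * (s - 1) ∧
        finrank ℝ (Module.End.eigenspace (J ∘ₗ A) a₁) = 2 ∧
        (∀ c : ℝ, c ≠ a₀ → c ≠ a₁ → Module.End.eigenspace (J ∘ₗ A) c = ⊥) := by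
  refine ⟨a₁ - a₀ - a₀ / 2, a₀ / 2, fun x hx A hA => ?_⟩
  have hT : J ∘ₗ A = (a₁ - a₀) • pairProjection B x (J x) + a₀ • 1 := by
    rw [hJ.comp_eq_pairProjection (B.separatingLeft_of_pos hpos) hx hA]
    congr 2 <;> ring
  have hk : a₁ - a₀ ≠ 0 := sub_ne_zero.2 hne.symm
  have hxJx := hJ.isSkewAdj.apply_self_right_eq_zero hsymm x
  have hJxx : B (J x) x = 0 := by rw [hsymm, hxJx]
  have hJxJx : B (J x) (J x) = 1 := by rw [hJ.2, hx]
  have hP := isIdempotentElem_pairProjection hx hJxJx hxJx hJxx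
  have hrange := finrank_range_pairProjection hx hJxJx hxJx hJxx
  have hcomm : Commute J ((a₁ - a₀) • pairProjection B x (J x) + a₀ • 1) :=
    ((hJ.commute_pairProjection x).smul_right _).add_right ((Commute.one_right J).smul_right _)
  rw [hT]
  refine ⟨fun v => LinearMap.congr_fun hcomm v,
    (isSelfAdj_pairProjection hsymm x (J x)).smul_add_smul_one _ _, ?_, ?_,
    fun c hc₀ hc₁ => Module.End.eigenspace_smul_add_smul_one_eq_bot hP a₀ hc₀
      (by rwa [sub_add_cancel])⟩
  · rw [Module.End.eigenspace_smul_add_smul_one_self hk]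
    have := LinearMap.finrank_range_add_finrank_ker (pairProjection B x (J x))
    omega
  · have := Module.End.eigenspace_smul_add_smul_one_add hP hk a₀
    rw [sub_add_cancel] at this
    rw [this, hrange]

/-- On a positive definite space of dimension `2s` (`s ≥ 2`), for any
distinct reals `a₀ ≠ a₁` one can choose `c₀, c₁` so that for `R = c₀ R_Id + c₁ R_J`
and every unit `x`, the operator `T = J ∘ R(x, Jx)` commutes with `J`, is
self-adjoint, and (as a complex-linear operator on `(V, J) ≅ ℂ^s`) has exactly the
eigenvalues `a₀` with multiplicity `s - 1` and `a₁` with multiplicity `1` (complex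
multiplicity `μ` corresponds to real eigenspace dimension `2μ`). -/
theorem eigenvalues_id_J
    (B : LinearMap.BilinForm ℝ V)
    (hsymm : ∀ x y : V, B x y = B y x)
    (hpos : ∀ x : V, x ≠ 0 → 0 < B x x)
    (s : ℕ) (hs : 2 ≤ s) (hdim : finrank ℝ V = 2 * s)
    (J : V →ₗ[ℝ] V) (hJ : IsPseudoHermitian B J)
    (a₀ a₁ : ℝ) (hne : a₀ ≠ a₁) :
    ∃ c₀ c₁ : ℝ, ∀ x : V, B x x = 1 →
      ∀ A : V →ₗ[ℝ] V,
        (∀ z w : V, B (A z) w =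
          c₀ * Rs B LinearMap.id x (J x) z w + c₁ * Ra B J x (J x) z w) →
        (∀ v : V, J ((J ∘ₗ A) v) = (J ∘ₗ A) (J v)) ∧
        (∀ z w : V, B ((J ∘ₗ A) z) w = B z ((J ∘ₗ A) w)) ∧
        finrank ℝ (Module.End.eigenspace (J ∘ₗ A) a₀) = 2 * (s - 1) ∧
        finrank ℝ (Module.End.eigenspace (J ∘ₗ A) a₁) = 2 ∧
        (∀ c : ℝ, c ≠ a₀ → c ≠ a₁ → Module.End.eigenspace (J ∘ₗ A) c = ⊥) :=
  eigenvalues_id_J_general B hsymm hpos s hdim J hJ a₀ a₁ hne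
end
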